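/- For all α > 0, β > 0 and δ ≥ 2αC_f/μ, there exists a constant C > 0 such that for all sufficiently small ε > 0: if ξ ∈ [−2C₀ + ε^{β+δ}, −ε^α], then Y(τ, ξ) − Y(τ, ξ − ε^{β+δ}) ≤ ε^β for all τ ∈ [0, C|log ε|]. -/

import Mathlib

/-!
Points of `[-2C₀, 2C₀]` stay there under the flow, since `f` points inwards at both ends
(`f (2C₀) < 0` by the linear bound, `f (-2C₀) > 0` by oddness). On that compact interval `f`
is `L`-Lipschitz, so Grönwall's inequality gives
`Y(τ, ξ) - Y(τ, ξ - ε^{β+δ}) ≤ ε^{β+δ} e^{Lτ}`, which is at most `ε^β` as long as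
`Lτ ≤ δ |log ε|`. Finally `δ > 0`, because `C_f ≥ f'(0) = μ > 0`.
-/

open Set Real NNReal

section AutonomousFlow

variable {F g : ℝ → ℝ}

theorem le_of_hasDerivAt_autonomous {b : ℝ} (hb : F b < 0)
    (hg : ∀ t, 0 ≤ t → HasDerivAt g (F (g t)) t) (h0 : g 0 ≤ b) {t : ℝ} (ht : 0 ≤ t) :
    g t ≤ b :=
  image_le_of_deriv_right_lt_deriv_boundary' (B := fun _ ↦ b) (B' := fun _ ↦ 0)
    (fun x hx ↦ (hg x hx.1).continuousAt.continuousWithinAt)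
    (fun x hx ↦ (hg x hx.1).hasDerivWithinAt) h0 continuousOn_const
    (fun x _ ↦ hasDerivWithinAt_const x _ b) (fun x _ hx ↦ by simpa [hx] using hb) ⟨ht, le_rfl⟩

theorem ge_of_hasDerivAt_autonomous {a : ℝ} (ha : 0 < F a)
    (hg : ∀ t, 0 ≤ t → HasDerivAt g (F (g t)) t) (h0 : a ≤ g 0) {t : ℝ} (ht : 0 ≤ t) :
    a ≤ g t := by
  have := le_of_hasDerivAt_autonomous (F := fun u ↦ -F (-u)) (g := fun t ↦ -g t) (b := -a)
    (by simpa using ha) (fun t ht ↦ by rw [neg_neg]; exact (hg t ht).neg) (by simpa using h0) ht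
  simpa using this

theorem mem_Icc_of_hasDerivAt_autonomous {a b : ℝ} (ha : 0 < F a) (hb : F b < 0)
    (hg : ∀ t, 0 ≤ t → HasDerivAt g (F (g t)) t) (h0 : g 0 ∈ Icc a b) {t : ℝ} (ht : 0 ≤ t) :
    g t ∈ Icc a b :=
  ⟨ge_of_hasDerivAt_autonomous ha hg h0.1 ht, le_of_hasDerivAt_autonomous hb hg h0.2 ht⟩

theorem abs_sub_le_of_hasDerivAt_autonomous {K : ℝ≥0} {s : Set ℝ} (hF : LipschitzOnWith K F s)
    {g₁ g₂ : ℝ → ℝ} (hg₁ : ∀ t, 0 ≤ t → HasDerivAt g₁ (F (g₁ t)) t)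
    (hg₂ : ∀ t, 0 ≤ t → HasDerivAt g₂ (F (g₂ t)) t)
    (hs₁ : ∀ t, 0 ≤ t → g₁ t ∈ s) (hs₂ : ∀ t, 0 ≤ t → g₂ t ∈ s) {t : ℝ} (ht : 0 ≤ t) :
    |g₁ t - g₂ t| ≤ |g₁ 0 - g₂ 0| * exp (K * t) := by
  simpa only [Real.dist_eq, sub_zero] using
    dist_le_of_trajectories_ODE_of_mem (v := fun _ ↦ F) (s := fun _ ↦ s) (fun _ _ ↦ hF)
      (fun x hx ↦ (hg₁ x hx.1).continuousAt.continuousWithinAt)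
      (fun x hx ↦ (hg₁ x hx.1).hasDerivWithinAt) (fun x hx ↦ hs₁ x hx.1)
      (fun x hx ↦ (hg₂ x hx.1).continuousAt.continuousWithinAt)
      (fun x hx ↦ (hg₂ x hx.1).hasDerivWithinAt) (fun x hx ↦ hs₂ x hx.1)
      le_rfl t ⟨ht, le_rfl⟩

end AutonomousFlow

theorem Real.rpow_add_mul_exp_mul_abs_log {ε : ℝ} (hε : 0 < ε) (hε1 : ε ≤ 1) (β δ : ℝ) :
    ε ^ (β + δ) * exp (δ * |log ε|) = ε ^ β := by
  rw [abs_of_nonpos (log_nonpos hε.le hε1), show δ * -log ε = log ε * -δ by ring,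
    ← rpow_def_of_pos hε, ← rpow_add hε, add_neg_cancel_right]

theorem stmt_2_general
    (f : ℝ → ℝ) (p μ C₀ Cf : ℝ)
    (hf : ContDiff ℝ 2 f)
    (hp : 0 < p) (hμ : 0 < μ) (hC₀ : 1 < C₀)
    (hf'0 : deriv f 0 = μ)
    (hodd : ∀ u : ℝ, f (-u) = -f u)
    (hf_lin : ∀ u : ℝ, 1 ≤ u → f u ≤ -p * (u - 1))
    (hCf : IsLUB (deriv f '' Set.Icc (-(2 * C₀)) (2 * C₀)) Cf)
    (Y : ℝ → ℝ → ℝ)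
    (hY0 : ∀ ξ : ℝ, Y 0 ξ = ξ)
    (hYode : ∀ ξ : ℝ, ∀ τ : ℝ, 0 ≤ τ → HasDerivAt (fun t => Y t ξ) (f (Y τ ξ)) τ)
    (α β δ : ℝ) (hα : 0 < α) (hδ : 2 * α * Cf / μ ≤ δ) :
    ∃ C : ℝ, 0 < C ∧
      ∃ ε₀ : ℝ, 0 < ε₀ ∧ ∀ ε : ℝ, 0 < ε → ε < ε₀ →
        ∀ ξ : ℝ, -(2 * C₀) + ε ^ (β + δ) ≤ ξ → ξ ≤ -(ε ^ α) →
          ∀ τ : ℝ, 0 ≤ τ → τ ≤ C * |Real.log ε| →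
            Y τ ξ - Y τ (ξ - ε ^ (β + δ)) ≤ ε ^ β := by
  set K := Icc (-(2 * C₀)) (2 * C₀)
  obtain ⟨L, hL⟩ : ∃ L, LipschitzOnWith L f K :=
    (hf.of_le one_le_two).locallyLipschitz.locallyLipschitzOn.exists_lipschitzOnWith_of_compact
      isCompact_Icc
  have hδ_pos : 0 < δ := by
    have hCf_pos : 0 < Cf := hμ.trans_le (hCf.1 ⟨0, ⟨by linarith, by linarith⟩, hf'0⟩)
    have : 0 < 2 * α * Cf / μ := by positivity
    linarith
  have hf_right : f (2 * C₀) < 0 := (hf_lin _ (by linarith)).trans_lt (by nlinarith)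
  have hf_left : 0 < f (-(2 * C₀)) := by linarith [hodd (2 * C₀)]
  have hK_inv : ∀ ζ ∈ K, ∀ t, 0 ≤ t → Y t ζ ∈ K := fun ζ hζ t ht ↦
    mem_Icc_of_hasDerivAt_autonomous hf_left hf_right (hYode ζ) (by rwa [hY0]) ht
  -- `L + 1` rather than `L`: the Lipschitz constant may be `0`, and then `δ / L = 0`.
  refine ⟨δ / (L + 1), by positivity, 1, one_pos, ?_⟩
  intro ε hε hε1 ξ hξ_lo hξ_hi τ hτ0 hτ
  have hη : 0 < ε ^ (β + δ) := rpow_pos_of_pos hε _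
  have hα_pos : 0 < ε ^ α := rpow_pos_of_pos hε _
  have hgron := abs_sub_le_of_hasDerivAt_autonomous
    (hL.weaken (le_add_of_nonneg_right zero_le_one)) (hYode ξ) (hYode (ξ - ε ^ (β + δ)))
    (hK_inv ξ ⟨by linarith, by linarith⟩) (hK_inv _ ⟨by linarith, by linarith⟩) hτ0
  rw [hY0, hY0, sub_sub_cancel, abs_of_pos hη] at hgron
  have hτ_log : ((L + 1 : ℝ≥0) : ℝ) * τ ≤ δ * |log ε| := by
    push_cast
    calc (L + 1 : ℝ) * τ ≤ (L + 1) * (δ / (L + 1) * |log ε|) := by gcongr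
      _ = δ * |log ε| := by field_simp
  calc Y τ ξ - Y τ (ξ - ε ^ (β + δ)) ≤ |Y τ ξ - Y τ (ξ - ε ^ (β + δ))| := le_abs_self _
    _ ≤ ε ^ (β + δ) * exp (((L + 1 : ℝ≥0) : ℝ) * τ) := hgron
    _ ≤ ε ^ (β + δ) * exp (δ * |log ε|) := by gcongr
    _ = ε ^ β := rpow_add_mul_exp_mul_abs_log hε hε1.le β δ

/-- Corollary 3.1 (ii): for all `α > 0`, `β > 0` and `δ ≥ 2αC_f/μ` there exists `C > 0`
such that for all sufficiently small `ε > 0`, if `ξ ∈ [−2C₀ + ε^{β+δ}, −ε^α]` then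
`Y(τ, ξ) − Y(τ, ξ − ε^{β+δ}) ≤ ε^β` for all `τ ∈ [0, C|log ε|]`. -/
theorem stmt_2
    (f : ℝ → ℝ) (p μ C₀ Cf : ℝ)
    (hf : ContDiff ℝ 2 f)
    (hp : 0 < p) (hμ : 0 < μ) (hC₀ : 1 < C₀)
    (hzeros : ∀ u : ℝ, f u = 0 ↔ u = -1 ∨ u = 0 ∨ u = 1)
    (hf'1 : deriv f 1 = -p) (hf'm1 : deriv f (-1) = -p)
    (hf'0 : deriv f 0 = μ)
    (hodd : ∀ u : ℝ, f (-u) = -f u)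
    (hf_lin : ∀ u : ℝ, 1 ≤ u → f u ≤ -p * (u - 1))
    (hCf : IsLUB (deriv f '' Set.Icc (-(2 * C₀)) (2 * C₀)) Cf)
    (Y : ℝ → ℝ → ℝ)
    (hY0 : ∀ ξ : ℝ, Y 0 ξ = ξ)
    (hYode : ∀ ξ : ℝ, ∀ τ : ℝ, 0 ≤ τ → HasDerivAt (fun t => Y t ξ) (f (Y τ ξ)) τ)
    (α β δ : ℝ) (hα : 0 < α) (hβ : 0 < β) (hδ : 2 * α * Cf / μ ≤ δ) :
    ∃ C : ℝ, 0 < C ∧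
      ∃ ε₀ : ℝ, 0 < ε₀ ∧ ∀ ε : ℝ, 0 < ε → ε < ε₀ →
        ∀ ξ : ℝ, -(2 * C₀) + ε ^ (β + δ) ≤ ξ → ξ ≤ -(ε ^ α) →
          ∀ τ : ℝ, 0 ≤ τ → τ ≤ C * |Real.log ε| →
            Y τ ξ - Y τ (ξ - ε ^ (β + δ)) ≤ ε ^ β :=
  stmt_2_general f p μ C₀ Cf hf hp hμ hC₀ hf'0 hodd hf_lin hCf Y hY0 hYode α β δ hα hδ
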